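/- arXiv:0908.0690 — 6 statements merged into one kernel-verified Lean document; each statement's English description precedes it below -/
import Mathlib

section
/- Let X be a complete CAT(0) space and let Y ⊆ X be a nonempty bounded subset. Define the circumradius ρ(Y) := inf{ r > 0 : Y ⊆ Ball_r(x) for some x ∈ X }, where Ball_r(x) denotes the closed ball of radius r about x. Then there exists a unique point c_Y ∈ X such that Y ⊆ Ball_{ρ(Y)}(c_Y). -/
/-- `m` is a midpoint of `x` and `y`: it lies at distance `dist x y / 2` from both. -/
def IsMidpoint {X : Type*} [MetricSpace X] (x y m : X) : Prop :=
  dist x m = dist x y / 2 ∧ dist y m = dist x y / 2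

/-- A CAT(0) space, via the Bruhat–Tits (CN inequality) characterization: every pair of
points has a midpoint satisfying the CN inequality. -/
class CAT0Space (X : Type*) [MetricSpace X] : Prop where
  cn : ∀ x y : X, ∃ m : X, IsMidpoint x y m ∧
    ∀ z : X, dist z m ^ 2 ≤ dist z x ^ 2 / 2 + dist z y ^ 2 / 2 - dist x y ^ 2 / 4

/-- The circumradius of a subset `Y`: the infimum of radii `r > 0` such that `Y` is
contained in the closed ball of radius `r` about some point of `X`. -/
noncomputable def circumradius {X : Type*} [MetricSpace X] (Y : Set X) : ℝ :=
  sInf {r : ℝ | 0 < r ∧ ∃ x : X, Y ⊆ Metric.closedBall x r}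

/-!
Write `f(x) = sup_{y ∈ Y} d(x, y)`; it is `1`-Lipschitz and `ρ = inf_X f`. Applying the CN
inequality at every point of `Y` gives a midpoint `m` of `x₁, x₂` with
`ρ² ≤ f(m)² ≤ (f(x₁)² + f(x₂)²)/2 - d(x₁, x₂)²/4`. So two points with `f² ≤ ρ² + δ` are
`2√δ`-close: a minimizing sequence is Cauchy, its limit is a circumcenter, and `δ = 0` gives
uniqueness.
-/

section Circumradius

variable {X : Type*} [MetricSpace X] {Y : Set X}

noncomputable def farthestDist (Y : Set X) (x : X) : ℝ :=
  ⨆ y : Y, dist x y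

lemma bddAbove_range_dist (hY : Bornology.IsBounded Y) (x : X) :
    BddAbove (Set.range fun y : Y => dist x y) := by
  obtain ⟨r, hr⟩ := hY.subset_closedBall x
  exact ⟨r, Set.forall_mem_range.2 fun y => by simpa [dist_comm] using hr y.2⟩

lemma farthestDist_nonneg (x : X) : 0 ≤ farthestDist Y x :=
  Real.iSup_nonneg fun _ => dist_nonneg

lemma dist_le_farthestDist (hY : Bornology.IsBounded Y) (x : X) {y : X} (hy : y ∈ Y) :
    dist x y ≤ farthestDist Y x :=
  le_ciSup (bddAbove_range_dist hY x) ⟨y, hy⟩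

lemma farthestDist_le_iff (hne : Y.Nonempty) (hY : Bornology.IsBounded Y) {x : X} {r : ℝ} :
    farthestDist Y x ≤ r ↔ ∀ y ∈ Y, dist x y ≤ r := by
  have : Nonempty Y := hne.to_subtype
  simp only [farthestDist, ciSup_le_iff (bddAbove_range_dist hY x), Subtype.forall]

lemma subset_closedBall_iff_farthestDist_le (hne : Y.Nonempty) (hY : Bornology.IsBounded Y)
    {x : X} {r : ℝ} : Y ⊆ Metric.closedBall x r ↔ farthestDist Y x ≤ r := by
  simp only [farthestDist_le_iff hne hY, Set.subset_def, Metric.mem_closedBall, dist_comm]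

lemma lipschitzWith_farthestDist (hne : Y.Nonempty) (hY : Bornology.IsBounded Y) :
    LipschitzWith 1 (farthestDist Y) :=
  LipschitzWith.of_le_add fun a b => (farthestDist_le_iff hne hY).2 fun y hy =>
    calc dist a y ≤ dist a b + dist b y := dist_triangle a b y
      _ ≤ farthestDist Y b + dist a b := by linarith [dist_le_farthestDist hY b hy]

lemma circumradius_nonneg : 0 ≤ circumradius Y :=
  Real.sInf_nonneg fun _ hr => hr.1.le

lemma circumradius_le_farthestDist (hne : Y.Nonempty) (hY : Bornology.IsBounded Y) (x : X) :
    circumradius Y ≤ farthestDist Y x := by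
  refine le_of_forall_pos_le_add fun ε hε => csInf_le ⟨0, fun _ hr => hr.1.le⟩
    ⟨add_pos_of_nonneg_of_pos (farthestDist_nonneg x) hε, x, ?_⟩
  exact (subset_closedBall_iff_farthestDist_le hne hY).2 (le_add_of_nonneg_right hε.le)

lemma exists_farthestDist_lt (hne : Y.Nonempty) (hY : Bornology.IsBounded Y) {s : ℝ}
    (hs : circumradius Y < s) : ∃ x, farthestDist Y x < s := by
  obtain ⟨r, hr⟩ := hY.subset_closedBall hne.some
  have hS : {r : ℝ | 0 < r ∧ ∃ x : X, Y ⊆ Metric.closedBall x r}.Nonempty :=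
    ⟨max r 1, by positivity, hne.some,
      hr.trans (Metric.closedBall_subset_closedBall (le_max_left _ _))⟩
  obtain ⟨r', ⟨-, x, hx⟩, hr's⟩ := exists_lt_of_csInf_lt hS hs
  exact ⟨x, ((subset_closedBall_iff_farthestDist_le hne hY).1 hx).trans_lt hr's⟩

lemma exists_farthestDist_sq_lt (hne : Y.Nonempty) (hY : Bornology.IsBounded Y) {δ : ℝ}
    (hδ : 0 < δ) : ∃ x, farthestDist Y x ^ 2 < circumradius Y ^ 2 + δ := by
  have hρ := circumradius_nonneg (Y := Y)
  have hlt : circumradius Y < √(circumradius Y ^ 2 + δ) :=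
    (Real.lt_sqrt hρ).2 (by linarith)
  obtain ⟨x, hx⟩ := exists_farthestDist_lt hne hY hlt
  refine ⟨x, ?_⟩
  calc farthestDist Y x ^ 2 < √(circumradius Y ^ 2 + δ) ^ 2 :=
        pow_lt_pow_left₀ hx (farthestDist_nonneg x) two_ne_zero
    _ = circumradius Y ^ 2 + δ := Real.sq_sqrt (by positivity)

end Circumradius

section CAT0

variable {X : Type*} [MetricSpace X] [CAT0Space X] {Y : Set X}

lemma exists_farthestDist_sq_le_average (hne : Y.Nonempty) (hY : Bornology.IsBounded Y)
    (x₁ x₂ : X) : ∃ m, farthestDist Y m ^ 2 ≤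
      farthestDist Y x₁ ^ 2 / 2 + farthestDist Y x₂ ^ 2 / 2 - dist x₁ x₂ ^ 2 / 4 := by
  obtain ⟨m, -, hm⟩ := CAT0Space.cn x₁ x₂
  set E := farthestDist Y x₁ ^ 2 / 2 + farthestDist Y x₂ ^ 2 / 2 - dist x₁ x₂ ^ 2 / 4
    with hE_def
  have hdist : ∀ y ∈ Y, dist m y ^ 2 ≤ E := fun y hy => by
    have h₁ := pow_le_pow_left₀ dist_nonneg (dist_le_farthestDist hY x₁ hy) 2
    have h₂ := pow_le_pow_left₀ dist_nonneg (dist_le_farthestDist hY x₂ hy) 2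
    have := hm y
    simp only [dist_comm y] at this
    linarith [hE_def]
  have hE : 0 ≤ E := (sq_nonneg _).trans (hdist _ hne.some_mem)
  refine ⟨m, (Real.le_sqrt (farthestDist_nonneg m) hE).1 ?_⟩
  exact (farthestDist_le_iff hne hY).2 fun y hy =>
    (Real.le_sqrt dist_nonneg hE).2 (hdist y hy)

lemma dist_sq_le_of_farthestDist_sq_le (hne : Y.Nonempty) (hY : Bornology.IsBounded Y)
    {x₁ x₂ : X} {δ : ℝ} (h₁ : farthestDist Y x₁ ^ 2 ≤ circumradius Y ^ 2 + δ)
    (h₂ : farthestDist Y x₂ ^ 2 ≤ circumradius Y ^ 2 + δ) :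
    dist x₁ x₂ ^ 2 ≤ 4 * δ := by
  obtain ⟨m, hm⟩ := exists_farthestDist_sq_le_average hne hY x₁ x₂
  have := pow_le_pow_left₀ circumradius_nonneg (circumradius_le_farthestDist hne hY m) 2
  linarith

lemma cauchySeq_of_farthestDist_sq_lt (hne : Y.Nonempty) (hY : Bornology.IsBounded Y)
    {u : ℕ → X} (hu : ∀ n, farthestDist Y (u n) ^ 2 < circumradius Y ^ 2 + 1 / (n + 1)) :
    CauchySeq u := by
  have hmono : ∀ {n N : ℕ}, N ≤ n →
      farthestDist Y (u n) ^ 2 ≤ circumradius Y ^ 2 + 1 / (N + 1) := fun hNn =>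
    (hu _).le.trans (add_le_add_right (Nat.one_div_le_one_div hNn) _)
  refine cauchySeq_of_le_tendsto_0 (fun N : ℕ => √(4 * (1 / (N + 1)))) ?_ ?_
  · exact fun n k N hn hk => Real.le_sqrt_of_sq_le
      (dist_sq_le_of_farthestDist_sq_le hne hY (hmono hn) (hmono hk))
  · simpa using ((tendsto_one_div_add_atTop_nhds_zero_nat.const_mul 4).sqrt)

lemma eq_of_farthestDist_le_circumradius (hne : Y.Nonempty) (hY : Bornology.IsBounded Y)
    {x₁ x₂ : X} (h₁ : farthestDist Y x₁ ≤ circumradius Y)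
    (h₂ : farthestDist Y x₂ ≤ circumradius Y) : x₁ = x₂ := by
  have hsq : ∀ {x}, farthestDist Y x ≤ circumradius Y →
      farthestDist Y x ^ 2 ≤ circumradius Y ^ 2 + 0 := fun hx => by
    simpa using pow_le_pow_left₀ (farthestDist_nonneg _) hx 2
  simpa using dist_sq_le_of_farthestDist_sq_le hne hY (hsq h₁) (hsq h₂)

variable [CompleteSpace X]

lemma exists_farthestDist_le_circumradius (hne : Y.Nonempty) (hY : Bornology.IsBounded Y) :
    ∃ c, farthestDist Y c ≤ circumradius Y := by
  choose u hu using fun n : ℕ =>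
    exists_farthestDist_sq_lt hne hY (Nat.one_div_pos_of_nat (n := n))
  obtain ⟨c, hc⟩ := cauchySeq_tendsto_of_complete (cauchySeq_of_farthestDist_sq_lt hne hY hu)
  have hlim : farthestDist Y c ^ 2 ≤ circumradius Y ^ 2 := by
    refine le_of_tendsto_of_tendsto
      (((lipschitzWith_farthestDist hne hY).continuous.tendsto c).comp hc |>.pow 2)
      (by simpa using tendsto_one_div_add_atTop_nhds_zero_nat.const_add (circumradius Y ^ 2))
      (Filter.Eventually.of_forall fun n => (hu n).le)
  exact ⟨c, (sq_le_sq₀ (farthestDist_nonneg c) circumradius_nonneg).1 hlim⟩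

end CAT0

/-- In a complete CAT(0) space, every nonempty bounded subset `Y` has a unique
circumcenter: a point `c` with `Y ⊆ Ball_{ρ(Y)}(c)`. -/
theorem circumcenter_existsUnique {X : Type*} [MetricSpace X] [CompleteSpace X] [CAT0Space X]
    {Y : Set X} (hne : Y.Nonempty) (hbd : Bornology.IsBounded Y) :
    ∃! c : X, Y ⊆ Metric.closedBall c (circumradius Y) := by
  simp only [subset_closedBall_iff_farthestDist_le hne hbd]
  obtain ⟨c, hc⟩ := exists_farthestDist_le_circumradius hne hbd
  exact ⟨c, hc, fun c' hc' => eq_of_farthestDist_le_circumradius hne hbd hc' hc⟩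
end

section
/- Let X be a complete CAT(0) space and let G be a group acting on X by isometries. If some G-orbit {g·x₀ : g ∈ G} is a bounded subset of X, then G has a global fixed point, i.e. there exists x ∈ X with g·x = x for all g ∈ G. -/
/-- If a group `G` acts by isometries on a complete CAT(0) space `X` and some orbit is
bounded, then `G` has a global fixed point. -/
theorem fixedPoint_of_boundedOrbit {X : Type*} [MetricSpace X] [CompleteSpace X] [CAT0Space X]
    {G : Type*} [Group G] [MulAction G X]
    (hiso : ∀ g : G, Isometry fun x : X => g • x)
    (x₀ : X) (hbd : Bornology.IsBounded (Set.range fun g : G => g • x₀)) :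
    ∃ x : X, ∀ g : G, g • x = x := by
  classical
  haveI : Nonempty X := ⟨x₀⟩
  set R : X → ℝ := fun x => ⨆ g : G, dist x (g • x₀) with hRdef
  obtain ⟨C, hC⟩ := (Metric.isBounded_iff_subset_closedBall x₀).1 hbd
  have hbdd : ∀ x : X, BddAbove (Set.range fun g : G => dist x (g • x₀)) := by
    intro x
    refine ⟨dist x x₀ + C, ?_⟩
    rintro r ⟨g, rfl⟩
    have hmem : g • x₀ ∈ Metric.closedBall x₀ C := hC ⟨g, rfl⟩
    have : dist (g • x₀) x₀ ≤ C := Metric.mem_closedBall.1 hmem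
    calc dist x (g • x₀) ≤ dist x x₀ + dist x₀ (g • x₀) := dist_triangle _ _ _
      _ ≤ dist x x₀ + C := by rw [dist_comm x₀]; linarith
  have hRle : ∀ (x : X) (g : G), dist x (g • x₀) ≤ R x := fun x g => le_ciSup (hbdd x) g
  have hRsup : ∀ (x : X) (c : ℝ), (∀ g : G, dist x (g • x₀) ≤ c) → R x ≤ c :=
    fun x c h => ciSup_le h
  have hRnonneg : ∀ x, 0 ≤ R x := fun x => le_trans dist_nonneg (hRle x 1)
  set ρ : ℝ := ⨅ x : X, R x with hρdef
  have hbddρ : BddBelow (Set.range R) := ⟨0, by rintro r ⟨x, rfl⟩; exact hRnonneg x⟩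
  have hρle : ∀ x, ρ ≤ R x := fun x => ciInf_le hbddρ x
  have hρnonneg : 0 ≤ ρ := le_ciInf hRnonneg
  -- key estimate from the CN inequality
  have key : ∀ x y : X, dist x y ^ 2 ≤ 2 * R x ^ 2 + 2 * R y ^ 2 - 4 * ρ ^ 2 := by
    intro x y
    obtain ⟨m, _hm, hcn⟩ := CAT0Space.cn x y
    have h1 : ∀ g : G, dist m (g • x₀) ^ 2 ≤ R x ^ 2 / 2 + R y ^ 2 / 2 - dist x y ^ 2 / 4 := by
      intro g
      have hz := hcn (g • x₀)
      have hx := hRle x g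
      have hy := hRle y g
      have hdx : dist (g • x₀) x = dist x (g • x₀) := dist_comm _ _
      have hdy : dist (g • x₀) y = dist y (g • x₀) := dist_comm _ _
      have hdm : dist (g • x₀) m = dist m (g • x₀) := dist_comm _ _
      rw [hdx, hdy, hdm] at hz
      have hx2 : dist x (g • x₀) ^ 2 ≤ R x ^ 2 := pow_le_pow_left₀ dist_nonneg hx 2
      have hy2 : dist y (g • x₀) ^ 2 ≤ R y ^ 2 := pow_le_pow_left₀ dist_nonneg hy 2
      linarith
    set B := R x ^ 2 / 2 + R y ^ 2 / 2 - dist x y ^ 2 / 4 with hBdef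
    have hB : 0 ≤ B := le_trans (sq_nonneg _) (h1 1)
    have hRm : R m ≤ Real.sqrt B := by
      apply hRsup
      intro g
      have h2 := h1 g
      calc dist m (g • x₀) = Real.sqrt (dist m (g • x₀) ^ 2) := by
            rw [Real.sqrt_sq dist_nonneg]
        _ ≤ Real.sqrt B := Real.sqrt_le_sqrt h2
    have hρm : ρ ≤ Real.sqrt B := le_trans (hρle m) hRm
    have h2 : ρ ^ 2 ≤ B := by
      have hs := Real.sq_sqrt hB
      nlinarith [Real.sqrt_nonneg B]
    rw [hBdef] at h2
    nlinarith
  -- minimizing sequence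
  have hexists : ∀ n : ℕ, ∃ x : X, R x < ρ + 1 / (n + 1) := by
    intro n
    have hpos : (0:ℝ) < 1 / (n + 1) := by positivity
    have hlt : ρ < ρ + 1 / (n + 1) := by linarith
    exact exists_lt_of_ciInf_lt hlt
  choose u hu using hexists
  -- Cauchy
  have hub : ∀ n N : ℕ, N ≤ n → R (u n) ≤ ρ + 1 / (N + 1) := by
    intro n N hN
    have h1 : (1:ℝ) / (n + 1) ≤ 1 / (N + 1) := by
      apply one_div_le_one_div_of_le
      · positivity
      · have : (N:ℝ) ≤ n := Nat.cast_le.2 hN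
        linarith
    linarith [(hu n).le]
  have hcauchy : CauchySeq u := by
    refine cauchySeq_of_le_tendsto_0 (fun N => 2 * Real.sqrt ((ρ + 1 / (N + 1)) ^ 2 - ρ ^ 2))
      ?_ ?_
    · intro n m N hn hm
      have h1 := hub n N hn
      have h2 := hub m N hm
      have hk := key (u n) (u m)
      have hnn : 0 ≤ ρ + 1 / (N + 1 : ℝ) := by positivity
      have hsq : dist (u n) (u m) ^ 2 ≤ 4 * ((ρ + 1 / (N + 1)) ^ 2 - ρ ^ 2) := by
        nlinarith [hRnonneg (u n), hRnonneg (u m)]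
      have hB : (0:ℝ) ≤ (ρ + 1 / (N + 1)) ^ 2 - ρ ^ 2 := by nlinarith
      calc dist (u n) (u m) = Real.sqrt (dist (u n) (u m) ^ 2) := by
            rw [Real.sqrt_sq dist_nonneg]
        _ ≤ Real.sqrt (4 * ((ρ + 1 / (N + 1)) ^ 2 - ρ ^ 2)) := Real.sqrt_le_sqrt hsq
        _ = 2 * Real.sqrt ((ρ + 1 / (N + 1)) ^ 2 - ρ ^ 2) := by
            rw [show (4:ℝ) = 2 ^ 2 by norm_num, Real.sqrt_mul (by positivity),
              Real.sqrt_sq (by norm_num : (0:ℝ) ≤ 2)]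
    · have h0 : Filter.Tendsto (fun N : ℕ => (1:ℝ) / (N + 1)) Filter.atTop (nhds 0) :=
        tendsto_one_div_add_atTop_nhds_zero_nat
      have h1 : Filter.Tendsto (fun N : ℕ => (ρ + 1 / (N + 1)) ^ 2 - ρ ^ 2)
          Filter.atTop (nhds 0) := by
        have := ((h0.const_add ρ).pow 2).sub_const (ρ ^ 2)
        simpa using this
      have h2 := (Real.continuous_sqrt.tendsto 0).comp h1
      simp only [Real.sqrt_zero] at h2
      simpa using h2.const_mul 2
  obtain ⟨c, hc⟩ := cauchySeq_tendsto_of_complete hcauchy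
  -- R c = ρ
  have hRc : R c ≤ ρ := by
    apply hRsup
    intro g
    have hle : ∀ n : ℕ, dist c (g • x₀) ≤ dist c (u n) + ρ + 1 / (n + 1) := by
      intro n
      calc dist c (g • x₀) ≤ dist c (u n) + dist (u n) (g • x₀) := dist_triangle _ _ _
        _ ≤ dist c (u n) + R (u n) := by linarith [hRle (u n) g]
        _ ≤ dist c (u n) + ρ + 1 / (n + 1) := by linarith [(hu n).le]
    have htend : Filter.Tendsto (fun n : ℕ => dist c (u n) + ρ + 1 / (n + 1))
        Filter.atTop (nhds ρ) := by
      have hd : Filter.Tendsto (fun n : ℕ => dist c (u n)) Filter.atTop (nhds 0) := by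
        simpa [dist_comm] using (tendsto_iff_dist_tendsto_zero.1 hc)
      have := (hd.add_const ρ).add tendsto_one_div_add_atTop_nhds_zero_nat
      simpa using this
    exact ge_of_tendsto htend (Filter.Eventually.of_forall hle)
  -- invariance of R under the action on c
  have hfix : ∀ g : G, g • c = c := by
    intro g
    have hRgc : R (g • c) ≤ ρ := by
      apply hRsup
      intro h
      have hiso' := (hiso g⁻¹).dist_eq (g • c) (h • x₀)
      have heq : dist (g • c) (h • x₀) = dist c ((g⁻¹ * h) • x₀) := by
        rw [← hiso']
        simp [mul_smul]
      rw [heq]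
      exact le_trans (hRle c (g⁻¹ * h)) hRc
    have hk := key (g • c) c
    have hd2 : dist (g • c) c ^ 2 ≤ 0 := by
      nlinarith [hρle (g • c), hρle c, hRnonneg (g • c), hRnonneg c]
    have : dist (g • c) c = 0 := by nlinarith [dist_nonneg (x := g • c) (y := c)]
    exact dist_eq_zero.1 this
  exact ⟨c, hfix⟩
end

section
/- Let X be a complete CAT(0) space and let γ be an isometry of X of finite order (γ^n = id for some n ≥ 1). If X is nonempty, then γ has a fixed point in X. -/
/-- A finite-order isometry of a nonempty complete CAT(0) space has a fixed point. -/
theorem fixedPoint_of_finiteOrder_isometry {X : Type*} [MetricSpace X] [CompleteSpace X]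
    [CAT0Space X] [Nonempty X]
    (γ : X ≃ᵢ X) (n : ℕ) (hn : 1 ≤ n) (hord : γ ^ n = 1) :
    ∃ x : X, γ x = x := by
  classical
  obtain ⟨x₀⟩ := ‹Nonempty X›
  set o : ℕ → X := fun i => (γ ^ i) x₀ with ho
  have hne : (Finset.range n).Nonempty := Finset.nonempty_range_iff.mpr (by omega)
  set F : X → ℝ := fun x => (Finset.range n).sup' hne (fun i => dist x (o i) ^ 2) with hFdef
  have hle_sup : ∀ (x : X) (i : ℕ), i ∈ Finset.range n → dist x (o i) ^ 2 ≤ F x := by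
    intro x i hi
    exact Finset.le_sup' (fun i => dist x (o i) ^ 2) hi
  have hF0 : ∀ x, 0 ≤ F x := by
    intro x
    exact le_trans (by positivity) (hle_sup x 0 (Finset.mem_range.mpr hn))
  have hbdd : BddBelow (Set.range F) := ⟨0, by rintro _ ⟨x, rfl⟩; exact hF0 x⟩
  set r : ℝ := sInf (Set.range F) with hrdef
  have hrle : ∀ x, r ≤ F x := fun x => csInf_le hbdd ⟨x, rfl⟩
  -- key semi-parallelogram inequality
  have key : ∀ x y : X, dist x y ^ 2 ≤ 2 * F x + 2 * F y - 4 * r := by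
    intro x y
    obtain ⟨m, _, hcn⟩ := CAT0Space.cn x y
    have hFm : F m ≤ F x / 2 + F y / 2 - dist x y ^ 2 / 4 := by
      apply Finset.sup'_le
      intro i hi
      have h := hcn (o i)
      have hx : dist (o i) x ^ 2 ≤ F x := by rw [dist_comm]; exact hle_sup x i hi
      have hy : dist (o i) y ^ 2 ≤ F y := by rw [dist_comm]; exact hle_sup y i hi
      have hm : dist m (o i) ^ 2 = dist (o i) m ^ 2 := by rw [dist_comm]
      rw [hm]
      linarith
    have := hrle m
    linarith
  -- minimizing sequence
  have hex : ∀ k : ℕ, ∃ x : X, F x < r + 1 / (k + 1) := by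
    intro k
    have hpos : (0 : ℝ) < 1 / (k + 1) := by positivity
    obtain ⟨_, ⟨x, rfl⟩, hx⟩ := Real.lt_sInf_add_pos (Set.range_nonempty F) hpos
    exact ⟨x, hx⟩
  choose u hu using hex
  have hdist : ∀ j k : ℕ, dist (u j) (u k) ^ 2 ≤ 2 / (j + 1) + 2 / (k + 1) := by
    intro j k
    have h1 := key (u j) (u k)
    have h2 := hu j
    have h3 := hu k
    have e1 : 2 / ((j : ℝ) + 1) = 2 * (1 / ((j : ℝ) + 1)) := by ring
    have e2 : 2 / ((k : ℝ) + 1) = 2 * (1 / ((k : ℝ) + 1)) := by ring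
    rw [e1, e2]
    linarith
  have hcauchy : CauchySeq u := by
    rw [Metric.cauchySeq_iff]
    intro ε hε
    obtain ⟨N, hN⟩ := exists_nat_gt (4 / ε ^ 2)
    refine ⟨N, fun j hj k hk => ?_⟩
    have hNj : (N : ℝ) + 1 ≤ (j : ℝ) + 1 := by exact_mod_cast Nat.succ_le_succ hj
    have hNk : (N : ℝ) + 1 ≤ (k : ℝ) + 1 := by exact_mod_cast Nat.succ_le_succ hk
    have hNp : (0 : ℝ) < (N : ℝ) + 1 := by positivity
    have h4 : 4 / ((N : ℝ) + 1) < ε ^ 2 := by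
      rw [div_lt_iff₀ hNp]
      have h5 : 4 / ε ^ 2 < (N : ℝ) + 1 := hN.trans (lt_add_one _)
      have := (div_lt_iff₀ (by positivity : (0:ℝ) < ε ^ 2)).mp h5
      nlinarith
    have h6 : dist (u j) (u k) ^ 2 < ε ^ 2 := by
      have := hdist j k
      have hj2 : 2 / ((j : ℝ) + 1) ≤ 2 / ((N : ℝ) + 1) := by
        apply div_le_div_of_nonneg_left (by norm_num) hNp hNj
      have hk2 : 2 / ((k : ℝ) + 1) ≤ 2 / ((N : ℝ) + 1) := by
        apply div_le_div_of_nonneg_left (by norm_num) hNp hNk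
      have e : 4 / ((N : ℝ) + 1) = 2 / ((N : ℝ) + 1) + 2 / ((N : ℝ) + 1) := by ring
      push_cast at this ⊢
      linarith
    exact lt_of_pow_lt_pow_left₀ 2 hε.le h6
  obtain ⟨c, hc⟩ := cauchySeq_tendsto_of_complete hcauchy
  -- the limit is a minimizer
  have hFc : F c = r := by
    refine le_antisymm ?_ (hrle c)
    apply Finset.sup'_le
    intro i hi
    have h1 : Filter.Tendsto (fun k => dist (u k) (o i) ^ 2) Filter.atTop
        (nhds (dist c (o i) ^ 2)) := (hc.dist tendsto_const_nhds).pow 2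
    have h2 : Filter.Tendsto (fun k : ℕ => r + 1 / ((k : ℝ) + 1)) Filter.atTop (nhds r) := by
      have h0 : Filter.Tendsto (fun k : ℕ => 1 / ((k : ℝ) + 1)) Filter.atTop (nhds 0) :=
        tendsto_one_div_add_atTop_nhds_zero_nat
      simpa using (tendsto_const_nhds (x := r) (f := Filter.atTop (α := ℕ))).add h0
    refine le_of_tendsto_of_tendsto' h1 h2 fun k => ?_
    exact le_trans (hle_sup (u k) i hi) (hu k).le
  -- γ c is also a minimizer
  have horbit : ∀ i ∈ Finset.range n, ∃ j ∈ Finset.range n, o i = γ (o j) := by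
    intro i hi
    match i with
    | 0 =>
      refine ⟨n - 1, Finset.mem_range.mpr (by omega), ?_⟩
      have h1 : γ * γ ^ (n - 1) = γ ^ n := by
        rw [← pow_succ']
        congr 1
        omega
      have h2 : γ ((γ ^ (n - 1)) x₀) = (γ * γ ^ (n - 1)) x₀ := rfl
      simp only [ho, pow_zero, IsometryEquiv.coe_one, id_eq]
      rw [h2, h1, hord, IsometryEquiv.coe_one, id_eq]
    | Nat.succ j =>
      refine ⟨j, Finset.mem_range.mpr (by have := Finset.mem_range.mp hi; omega), ?_⟩
      simp only [ho]
      rw [pow_succ']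
      rfl
  have hFγ : F (γ c) = r := by
    refine le_antisymm ?_ (hrle (γ c))
    apply Finset.sup'_le
    intro i hi
    obtain ⟨j, hj, hoj⟩ := horbit i hi
    rw [hoj, γ.dist_eq]
    rw [← hFc]
    exact hle_sup c j hj
  -- conclude by uniqueness of the minimizer
  have h := key c (γ c)
  rw [hFc, hFγ] at h
  have hd : dist c (γ c) = 0 := by nlinarith [dist_nonneg (x := c) (y := γ c)]
  exact ⟨c, (dist_eq_zero.mp hd).symm⟩
end

section
/- Let X be a complete CAT(0) space and let S₁, …, S_ℓ be subsets of Isom(X) such that every element of S_i commutes with every element of S_j whenever i ≠ j. Suppose for each i = 1, …, ℓ a finite subset T_i ⊆ S_i is given such that Fix(T_i) is nonempty. Then Fix(T₁ ∪ ⋯ ∪ T_ℓ) is nonempty. -/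
section aux

variable {X : Type*} [MetricSpace X]

/-- Midpoints in a CAT(0) space are unique. -/
lemma CAT0Space.midpoint_unique [CAT0Space X] {x y m m' : X}
    (hm : IsMidpoint x y m) (hm' : IsMidpoint x y m') : m = m' := by
  obtain ⟨m₀, h₀, hcn⟩ := CAT0Space.cn x y
  have key : ∀ w : X, IsMidpoint x y w → w = m₀ := by
    intro w hw
    have h1 := hcn w
    have hx : dist w x = dist x y / 2 := by rw [dist_comm]; exact hw.1
    have hy : dist w y = dist x y / 2 := by rw [dist_comm]; exact hw.2
    rw [hx, hy] at h1
    have h2 : dist w m₀ ^ 2 ≤ 0 := by nlinarith [h1]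
    have h3 : dist w m₀ = 0 := by nlinarith [dist_nonneg (x := w) (y := m₀)]
    exact dist_eq_zero.mp h3
  rw [key m hm, key m' hm']

/-- Uniqueness of nearest points to a midpoint-closed set in a CAT(0) space. -/
lemma CAT0Space.proj_unique [CAT0Space X] {Y : Set X}
    (hmid : ∀ a ∈ Y, ∀ b ∈ Y, ∀ m, IsMidpoint a b m → m ∈ Y)
    {x p q : X} (hp : p ∈ Y) (hq : q ∈ Y)
    (hpm : ∀ y ∈ Y, dist x p ≤ dist x y) (hqm : ∀ y ∈ Y, dist x q ≤ dist x y) :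
    p = q := by
  obtain ⟨m, hm, hcn⟩ := CAT0Space.cn p q
  have hmY := hmid p hp q hq m hm
  have h1 := hcn x
  have h2 := hpm m hmY
  have hpq : dist x p = dist x q := le_antisymm (hpm q hq) (hqm p hp)
  have h3 : dist p q ≤ 0 := by
    nlinarith [dist_nonneg (x := x) (y := p), dist_nonneg (x := p) (y := q),
      dist_nonneg (x := x) (y := m)]
  exact dist_eq_zero.mp (le_antisymm h3 dist_nonneg)

/-- Existence of nearest points to a nonempty closed midpoint-closed set in a complete
CAT(0) space. -/
lemma CAT0Space.exists_proj [CompleteSpace X] [CAT0Space X] {Y : Set X}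
    (hne : Y.Nonempty) (hcl : IsClosed Y)
    (hmid : ∀ a ∈ Y, ∀ b ∈ Y, ∀ m, IsMidpoint a b m → m ∈ Y)
    (x : X) : ∃ p ∈ Y, ∀ y ∈ Y, dist x p ≤ dist x y := by
  set d := Metric.infDist x Y with hd
  have hd0 : 0 ≤ d := Metric.infDist_nonneg
  have hseq : ∀ n : ℕ, ∃ y ∈ Y, dist x y < d + 1 / (n + 1) := by
    intro n
    have hlt : d < d + 1 / (n + 1 : ℝ) := by
      have : (0 : ℝ) < 1 / (n + 1) := by positivity
      linarith
    exact (Metric.infDist_lt_iff hne).mp hlt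
  choose y hyY hylt using hseq
  have hge : ∀ n, d ≤ dist x (y n) := fun n => Metric.infDist_le_dist_of_mem (hyY n)
  have htend : Filter.Tendsto (fun n => dist x (y n)) Filter.atTop (nhds d) := by
    have h1 : Filter.Tendsto (fun n : ℕ => d + 1 / (n + 1 : ℝ)) Filter.atTop (nhds (d + 0)) :=
      Filter.Tendsto.const_add d tendsto_one_div_add_atTop_nhds_zero_nat
    rw [add_zero] at h1
    exact tendsto_of_tendsto_of_tendsto_of_le_of_le tendsto_const_nhds h1 hge
      (fun n => le_of_lt (hylt n))
  have hcauchy : CauchySeq y := by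
    rw [Metric.cauchySeq_iff]
    intro ε hε
    have hsq : Filter.Tendsto (fun n => dist x (y n) ^ 2) Filter.atTop (nhds (d ^ 2)) :=
      htend.pow 2
    have hev : ∀ᶠ n in Filter.atTop, dist x (y n) ^ 2 < d ^ 2 + ε ^ 2 / 4 :=
      hsq.eventually (gt_mem_nhds (by nlinarith))
    obtain ⟨N, hN⟩ := Filter.eventually_atTop.mp hev
    refine ⟨N, fun m hm n hn => ?_⟩
    obtain ⟨w, hw, hcn⟩ := CAT0Space.cn (y m) (y n)
    have hwY : w ∈ Y := hmid _ (hyY m) _ (hyY n) w hw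
    have h1 := hcn x
    have h2 : d ≤ dist x w := Metric.infDist_le_dist_of_mem hwY
    have hm2 := hN m hm
    have hn2 := hN n hn
    have h3 : dist (y m) (y n) ^ 2 < ε ^ 2 := by nlinarith [dist_nonneg (x := x) (y := w)]
    exact lt_of_pow_lt_pow_left₀ 2 (le_of_lt hε) h3
  obtain ⟨p, hp⟩ := cauchySeq_tendsto_of_complete hcauchy
  have hpY : p ∈ Y := hcl.mem_of_tendsto hp (Filter.Eventually.of_forall hyY)
  have hdp : dist x p = d := by
    have h1 : Filter.Tendsto (fun n => dist x (y n)) Filter.atTop (nhds (dist x p)) :=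
      (Continuous.tendsto (continuous_const.dist continuous_id) p).comp hp
    exact tendsto_nhds_unique h1 htend
  refine ⟨p, hpY, fun z hz => ?_⟩
  rw [hdp]
  exact Metric.infDist_le_dist_of_mem hz

end aux

/-- Let `S 1, …, S ℓ` be sets of isometries of a complete CAT(0) space such that elements
of distinct `S i` commute. If finite subsets `T i ⊆ S i` are given, each with nonempty
fixed-point set, then `Fix(T 1 ∪ ⋯ ∪ T ℓ)` is nonempty. -/
theorem commuting_finite_subsets_common_fixedPoint {X : Type*} [MetricSpace X]
    [CompleteSpace X] [CAT0Space X] {ℓ : ℕ} (hℓ : 1 ≤ ℓ)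
    (S : Fin ℓ → Set (X ≃ᵢ X)) (T : Fin ℓ → Finset (X ≃ᵢ X))
    (hTS : ∀ i, ↑(T i) ⊆ S i)
    (hcomm : ∀ i j, i ≠ j → ∀ a ∈ S i, ∀ b ∈ S j, a * b = b * a)
    (hfix : ∀ i, ∃ x : X, ∀ h ∈ T i, h x = x) :
    ∃ x : X, ∀ i, ∀ h ∈ T i, h x = x := by
  suffices H : ∀ k : ℕ, ∃ x : X, ∀ i : Fin ℓ, (i : ℕ) < k → ∀ h ∈ T i, h x = x by
    obtain ⟨x, hx⟩ := H ℓ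
    exact ⟨x, fun i => hx i i.isLt⟩
  intro k
  induction k with
  | zero =>
    obtain ⟨x, -⟩ := hfix ⟨0, hℓ⟩
    exact ⟨x, fun i hi => absurd hi (Nat.not_lt_zero _)⟩
  | succ k ih =>
    obtain ⟨x₀, hx₀⟩ := ih
    by_cases hk : k < ℓ
    · set Y : Set X := {y | ∀ i : Fin ℓ, (i : ℕ) < k → ∀ h ∈ T i, h y = y} with hY
      have hYne : Y.Nonempty := ⟨x₀, hx₀⟩
      have hYcl : IsClosed Y := by
        have hYeq : Y = ⋂ i : Fin ℓ, ⋂ (_ : (i : ℕ) < k), ⋂ h ∈ T i, {y | h y = y} := by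
          ext z; simp [hY]
        rw [hYeq]
        exact isClosed_iInter fun i => isClosed_iInter fun _ => isClosed_iInter fun h =>
          isClosed_iInter fun _ =>
            isClosed_eq h.continuous continuous_id
      have hYmid : ∀ a ∈ Y, ∀ b ∈ Y, ∀ m, IsMidpoint a b m → m ∈ Y := by
        intro a ha b hb m hm i hi h hh
        have hmid' : IsMidpoint a b (h m) := by
          constructor
          · calc dist a (h m) = dist (h a) (h m) := by rw [ha i hi h hh]
              _ = dist a m := h.dist_eq a m
              _ = dist a b / 2 := hm.1
          · calc dist b (h m) = dist (h b) (h m) := by rw [hb i hi h hh]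
              _ = dist b m := h.dist_eq b m
              _ = dist a b / 2 := hm.2
        exact CAT0Space.midpoint_unique hmid' hm
      obtain ⟨xk, hxk⟩ := hfix ⟨k, hk⟩
      obtain ⟨p, hpY, hpmin⟩ := CAT0Space.exists_proj hYne hYcl hYmid xk
      refine ⟨p, fun i hi h hh => ?_⟩
      rcases Nat.lt_succ_iff_lt_or_eq.mp hi with h' | h'
      · exact hpY i h' h hh
      · have hieq : i = ⟨k, hk⟩ := Fin.ext h'
        subst hieq
        have hhp : h p ∈ Y := by
          intro j hj g hg
          have hne : j ≠ (⟨k, hk⟩ : Fin ℓ) := Fin.ne_of_val_ne (by omega)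
          have hcm := hcomm j ⟨k, hk⟩ hne g (hTS j hg) h (hTS _ hh)
          have h1 : (g * h) p = (h * g) p := by rw [hcm]
          simp only [IsometryEquiv.mul_apply] at h1
          rw [h1, hpY j hj g hg]
        have hmin' : ∀ z ∈ Y, dist xk (h p) ≤ dist xk z := by
          intro z hz
          calc dist xk (h p) = dist (h xk) (h p) := by rw [hxk h hh]
            _ = dist xk p := h.dist_eq xk p
            _ ≤ dist xk z := hpmin z hz
        exact CAT0Space.proj_unique hYmid hhp hpY hmin' hpmin
    · exact ⟨x₀, fun i hi => hx₀ i (lt_of_lt_of_le i.isLt (Nat.le_of_not_lt hk))⟩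
end

section
/- Let X be a complete CAT(0) space, let C ⊆ X be a nonempty closed subset that is closed under midpoints, and let Y ⊆ C be a nonempty bounded subset. Then the circumcenter c_Y of Y (the unique point with Y ⊆ Ball_{ρ(Y)}(c_Y), where ρ(Y) = inf{ r > 0 : Y ⊆ Ball_r(x) for some x ∈ X }) lies in C. -/
set_option maxHeartbeats 1600000 in
/-- If `C` is a nonempty closed subset of a complete CAT(0) space which is closed under
midpoints, and `Y ⊆ C` is nonempty and bounded, then the circumcenter of `Y` (any point
`c` with `Y ⊆ Ball_{ρ(Y)}(c)`, which is unique) lies in `C`. -/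
theorem circumcenter_mem_of_closed_midpointConvex {X : Type*} [MetricSpace X]
    [CompleteSpace X] [CAT0Space X]
    (C : Set X) (hCne : C.Nonempty) (hCcl : IsClosed C)
    (hCmid : ∀ x ∈ C, ∀ y ∈ C, ∀ m : X, IsMidpoint x y m → m ∈ C)
    {Y : Set X} (hYC : Y ⊆ C) (hne : Y.Nonempty) (hbd : Bornology.IsBounded Y) :
    ∀ c : X, Y ⊆ Metric.closedBall c (circumradius Y) → c ∈ C := by
  intro c hc
  by_contra hcC
  set δ := Metric.infDist c C with hδdef
  clear_value δ
  have hδpos : 0 < δ := by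
    rw [hδdef]; exact (hCcl.notMem_iff_infDist_pos hCne).mp hcC
  obtain ⟨y0, hy0⟩ := hne
  have hcy0 : dist c y0 ≤ circumradius Y := by
    have := hc hy0
    simpa [Metric.mem_closedBall, dist_comm] using this
  have hρδ : δ ≤ circumradius Y := by
    rw [hδdef]; exact le_trans (Metric.infDist_le_dist_of_mem (hYC hy0)) hcy0
  set ρ := circumradius Y with hρdef
  clear_value ρ
  have hρpos : 0 < ρ := lt_of_lt_of_le hδpos hρδ
  -- choose K with (1/2)^K * ρ^2 < δ^2/2
  obtain ⟨K, hK⟩ : ∃ K : ℕ, ((1:ℝ)/2) ^ K < δ ^ 2 / (2 * ρ ^ 2) := by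
    obtain ⟨K, hK⟩ := exists_pow_lt_of_lt_one
      (show (0:ℝ) < δ ^ 2 / (2 * ρ ^ 2) by positivity) (by norm_num : (1:ℝ)/2 < 1)
    exact ⟨K, hK⟩
  have hKρ : ((1:ℝ)/2) ^ K * ρ ^ 2 < δ ^ 2 / 2 := by
    have h' : ((1:ℝ)/2) ^ K * (2 * ρ ^ 2) < δ ^ 2 :=
      (lt_div_iff₀ (by positivity)).mp hK
    nlinarith
  have hs_pos : (0:ℝ) < ((1:ℝ)/2) ^ K := by positivity
  have hδρ : δ ^ 2 ≤ ρ ^ 2 := by nlinarith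
  have hhalf : (0:ℝ) < 1 - ((1:ℝ)/2) ^ K := by nlinarith
  set ε := δ ^ 2 * ((1:ℝ)/2) ^ K / 4 with hεdef
  clear_value ε
  have hεpos : 0 < ε := by rw [hεdef]; positivity
  -- choose c' ∈ C almost realizing the infimum distance
  obtain ⟨c', hc'C, hc'd⟩ : ∃ c' ∈ C, dist c c' ^ 2 ≤ δ ^ 2 + ε := by
    set ε' := min 1 (ε / (2 * δ + 2)) with hε'def
    clear_value ε'
    have hε'pos : 0 < ε' := by
      rw [hε'def]
      exact lt_min one_pos (by positivity)
    have hε'le1 : ε' ≤ 1 := by rw [hε'def]; exact min_le_left _ _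
    have hε'le : ε' ≤ ε / (2 * δ + 2) := by rw [hε'def]; exact min_le_right _ _
    obtain ⟨c', hc'C, hlt⟩ := (Metric.infDist_lt_iff hCne).mp
      (show Metric.infDist c C < δ + ε' by rw [← hδdef]; linarith)
    refine ⟨c', hc'C, ?_⟩
    have hd0 : 0 ≤ dist c c' := dist_nonneg
    have h1 : dist c c' ^ 2 ≤ (δ + ε') ^ 2 := by nlinarith
    have h2 : ε' * (2 * δ + 2) ≤ ε :=
      (le_div_iff₀ (by positivity)).mp hε'le
    nlinarith
  -- key induction
  have main : ∀ k : ℕ, ∀ q ∈ C,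
      δ ^ 2 + (1 - ((1:ℝ)/2) ^ k) * dist c' q ^ 2 - ((2:ℝ) ^ k - 1) * ε ≤ dist c q ^ 2 := by
    intro k
    induction k with
    | zero =>
      intro q hq
      have h1 : δ ≤ dist c q := by
        rw [hδdef]; exact Metric.infDist_le_dist_of_mem hq
      have h2 : (0:ℝ) ≤ dist c q := dist_nonneg
      simp only [pow_zero]
      nlinarith
    | succ k ih =>
      intro q hq
      obtain ⟨m, hm, hcn⟩ := CAT0Space.cn c' q
      have hmC : m ∈ C := hCmid c' hc'C q hq m hm
      have h1 := ih m hmC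
      rw [hm.1] at h1
      have h2 := hcn c
      have e1 : ((1:ℝ)/2) ^ (k+1) = ((1:ℝ)/2) ^ k / 2 := by ring
      have e2 : ((2:ℝ)) ^ (k+1) = 2 * 2 ^ k := by ring
      rw [e1, e2]
      nlinarith [h1, h2, hc'd]
  -- apply it at y ∈ Y
  have h2K : ((2:ℝ)) ^ K * ((1:ℝ)/2) ^ K = 1 := by
    rw [← mul_pow]; norm_num
  set r' := Real.sqrt ((ρ ^ 2 - 3 * δ ^ 2 / 4) / (1 - ((1:ℝ)/2) ^ K)) with hr'def
  clear_value r'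
  have hr'0 : 0 ≤ r' := by rw [hr'def]; exact Real.sqrt_nonneg _
  have hr'lt : r' < ρ := by
    rw [hr'def, Real.sqrt_lt' hρpos, div_lt_iff₀ hhalf]
    nlinarith
  have hsub : Y ⊆ Metric.closedBall c' ((r' + ρ) / 2) := by
    intro y hy
    have h := main K y (hYC hy)
    have hcy : dist c y ≤ ρ := by
      have := hc hy
      simpa [Metric.mem_closedBall, dist_comm] using this
    have hcy0' : 0 ≤ dist c y := dist_nonneg
    have hD : dist c' y ^ 2 ≤ (ρ ^ 2 - 3 * δ ^ 2 / 4) / (1 - ((1:ℝ)/2) ^ K) := by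
      rw [le_div_iff₀ hhalf]
      have hcy2 : dist c y ^ 2 ≤ ρ ^ 2 := by nlinarith
      have hε2 : ((2:ℝ) ^ K - 1) * ε = δ ^ 2 / 4 - δ ^ 2 * ((1:ℝ)/2) ^ K / 4 := by
        rw [hεdef]; linear_combination (δ ^ 2 / 4) * h2K
      nlinarith [h, hcy2, hε2, hs_pos, sq_nonneg δ]
    have hDle : dist c' y ≤ r' := by
      have h1 : dist c' y = Real.sqrt (dist c' y ^ 2) := (Real.sqrt_sq dist_nonneg).symm
      rw [h1, hr'def]
      exact Real.sqrt_le_sqrt hD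
    rw [Metric.mem_closedBall, dist_comm]
    linarith
  have hmem : (r' + ρ) / 2 ∈ {r : ℝ | 0 < r ∧ ∃ x : X, Y ⊆ Metric.closedBall x r} :=
    ⟨by linarith, c', hsub⟩
  have hle : circumradius Y ≤ (r' + ρ) / 2 := by
    rw [circumradius]
    exact csInf_le ⟨0, fun r hr => le_of_lt hr.1⟩ hmem
  rw [← hρdef] at hle
  linarith
end

section
/- Let Γ be a group acting by isometries on a complete CAT(0) space X, and suppose γ ∈ Γ acts as a hyperbolic isometry: there exists x₀ ∈ X with d(γ·x₀, x₀) = |γ| and |γ| > 0, where |γ| := inf{ d(γ·y, y) : y ∈ X }. Then the image of γ in the abelianization of its centralizer Z_Γ(γ) = {g ∈ Γ : gγ = γg} has infinite order; in particular γ has infinite order in the abelianization of Z_Γ(γ). -/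
/-!
Let `ℓ = |γ| > 0` and let `x₀` realise it. The CN inequality forces the orbit `n ↦ γ ^ n • w` of
any minimal point `w` to be a geodesic, so `b_w x = lim (dist x (γ ^ n • w) - n ℓ)` is a Busemann
function. Any two such functions differ by a constant: one inequality is the 1-Lipschitz property,
the other comes from the CN inequality applied to the quadrilateral `w, w', γ ^ n • w', γ ^ n • w`.
The centralizer of `γ` permutes the minimal points, so `g ↦ b_{x₀} (g • x₀)` is a homomorphism to
`ℝ`, and it sends `γ` to `-ℓ ≠ 0`.
-/

section CAT0

variable {X : Type*} [MetricSpace X] [CAT0Space X]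

/-- Midpoints are unique, so every midpoint satisfies the CN inequality. -/
theorem IsMidpoint.dist_sq_le {x y m : X} (h : IsMidpoint x y m) (z : X) :
    dist z m ^ 2 ≤ dist z x ^ 2 / 2 + dist z y ^ 2 / 2 - dist x y ^ 2 / 4 := by
  obtain ⟨m', -, hcn⟩ := CAT0Space.cn x y
  have hmm' := hcn m
  rw [dist_comm m x, dist_comm m y, h.1, h.2] at hmm'
  have : dist m m' = 0 := le_antisymm (by nlinarith) dist_nonneg
  rw [dist_eq_zero.mp this]
  exact hcn z

theorem dist_sq_add_dist_sq_le (p q r s : X) :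
    dist p r ^ 2 + dist q s ^ 2 ≤
      dist p q ^ 2 + dist q r ^ 2 + dist r s ^ 2 + dist s p ^ 2 := by
  obtain ⟨m, -, hcn⟩ := CAT0Space.cn p r
  have hq := hcn q
  have hs := hcn s
  have htri : dist q s ≤ dist q m + dist s m := by
    simpa only [dist_comm m s] using dist_triangle q m s
  have hsq : dist q s ^ 2 ≤ 2 * dist q m ^ 2 + 2 * dist s m ^ 2 := by
    nlinarith [sq_nonneg (dist q m - dist s m), dist_nonneg (x := q) (y := s)]
  rw [dist_comm p q, dist_comm r s]
  linarith

/-- A discrete local geodesic is a geodesic. -/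
theorem dist_eq_mul_of_localGeodesic {e : ℕ → X} {s : ℝ}
    (h1 : ∀ k, dist (e k) (e (k + 1)) = s) (h2 : ∀ k, dist (e k) (e (k + 2)) = 2 * s)
    (n : ℕ) : dist (e 0) (e n) = n * s := by
  have hs : 0 ≤ s := h1 0 ▸ dist_nonneg
  suffices h : ∀ n : ℕ, dist (e 0) (e n) = n * s ∧ dist (e 0) (e (n + 1)) = (n + 1) * s from
    (h n).1
  intro n
  induction n with
  | zero => simp [h1 0]
  | succ k ih =>
    refine ⟨by push_cast; exact ih.2, ?_⟩
    have hmid : IsMidpoint (e k) (e (k + 2)) (e (k + 1)) :=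
      ⟨by rw [h1, h2]; ring, by rw [dist_comm, h1, h2]; ring⟩
    have hcn := hmid.dist_sq_le (e 0)
    rw [ih.1, ih.2, h2] at hcn
    have hub : dist (e 0) (e (k + 2)) ≤ (k + 2) * s := by
      have := dist_triangle (e 0) (e (k + 1)) (e (k + 2))
      rw [ih.2, h1] at this
      linarith
    have hlb : (k + 2) * s ≤ dist (e 0) (e (k + 2)) := by
      nlinarith [dist_nonneg (x := e 0) (y := e (k + 2))]
    push_cast
    linarith

end CAT0

section Busemann

variable {X : Type*} [MetricSpace X] {Γ : Type*} [Group Γ] [MulAction Γ X]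
  [IsIsometricSMul Γ X] {γ : Γ} {ℓ : ℝ} {w w' : X}

theorem dist_pow_smul_self [CAT0Space X] (hle : ∀ u : X, ℓ ≤ dist (γ • u) u)
    (hw : dist (γ • w) w = ℓ) (n : ℕ) : dist (γ ^ n • w) w = n * ℓ := by
  obtain ⟨m, hm, -⟩ := CAT0Space.cn w (γ • w)
  rw [IsMidpoint, dist_comm w (γ • w), hw] at hm
  have hmγ : dist m (γ • m) = ℓ := by
    refine le_antisymm ?_ (dist_comm m (γ • m) ▸ hle m)
    calc dist m (γ • m) ≤ dist m (γ • w) + dist (γ • w) (γ • m) := dist_triangle _ _ _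
      _ = ℓ := by rw [dist_comm, hm.2, dist_smul, hm.1]; ring
  set e : ℕ → X := fun k => γ ^ (k / 2) • if Even k then w else m
  have heven : ∀ j, e (2 * j) = γ ^ j • w := fun j => by simp [e]
  have hodd : ∀ j, e (2 * j + 1) = γ ^ j • m := fun j => by
    simp [e, Nat.mul_add_div]
  have hsucc : ∀ (j : ℕ) (a : X), γ ^ (j + 1) • a = γ ^ j • γ • a := fun j a => by
    rw [pow_succ, mul_smul]
  have h1 : ∀ k, dist (e k) (e (k + 1)) = ℓ / 2 := by
    intro k
    obtain ⟨j, rfl | rfl⟩ := Nat.even_or_odd' k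
    · rw [heven, hodd, dist_smul, hm.1]
    · rw [show 2 * j + 1 + 1 = 2 * (j + 1) by ring, hodd, heven, hsucc, dist_smul,
        dist_comm, hm.2]
  have h2 : ∀ k, dist (e k) (e (k + 2)) = 2 * (ℓ / 2) := by
    intro k
    obtain ⟨j, rfl | rfl⟩ := Nat.even_or_odd' k
    · rw [show 2 * j + 2 = 2 * (j + 1) by ring, heven, heven, hsucc, dist_smul, dist_comm, hw]
      ring
    · rw [show 2 * j + 1 + 2 = 2 * (j + 1) + 1 by ring, hodd, hodd, hsucc, dist_smul, hmγ]
      ring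
  have := dist_eq_mul_of_localGeodesic h1 h2 (2 * n)
  rw [heven, show e 0 = w by simpa using heven 0] at this
  rw [dist_comm, this]
  push_cast
  ring

/-- When `w` is a minimal point of `γ` and `ℓ = |γ|`, this is the Busemann function of the
geodesic ray `n ↦ γ ^ n • w`, normalised to vanish at `w`. -/
noncomputable def busemann (γ : Γ) (ℓ : ℝ) (w x : X) : ℝ :=
  ⨅ n : ℕ, (dist x (γ ^ n • w) - n * ℓ)

theorem busemann_smul_smul {g : Γ} (hg : Commute g γ) (w x : X) :
    busemann γ ℓ (g • w) (g • x) = busemann γ ℓ w x := by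
  refine congrArg _ (funext fun n => ?_)
  rw [← mul_smul, ← (hg.pow_right n).eq, mul_smul, dist_smul]

variable [CAT0Space X]

theorem neg_dist_le_dist_pow_smul_sub (hle : ∀ u : X, ℓ ≤ dist (γ • u) u)
    (hw : dist (γ • w) w = ℓ) (x : X) (n : ℕ) :
    -dist x w ≤ dist x (γ ^ n • w) - n * ℓ := by
  have := dist_triangle (γ ^ n • w) x w
  rw [dist_pow_smul_self hle hw, dist_comm] at this
  linarith

theorem busemann_le (hle : ∀ u : X, ℓ ≤ dist (γ • u) u) (hw : dist (γ • w) w = ℓ)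
    (x : X) (n : ℕ) : busemann γ ℓ w x ≤ dist x (γ ^ n • w) - n * ℓ :=
  ciInf_le ⟨-dist x w, by
    rintro _ ⟨k, rfl⟩
    exact neg_dist_le_dist_pow_smul_sub hle hw x k⟩ n

theorem neg_dist_le_busemann (hle : ∀ u : X, ℓ ≤ dist (γ • u) u)
    (hw : dist (γ • w) w = ℓ) (x : X) : -dist x w ≤ busemann γ ℓ w x :=
  le_ciInf (neg_dist_le_dist_pow_smul_sub hle hw x)

theorem busemann_le_dist_add (hle : ∀ u : X, ℓ ≤ dist (γ • u) u) (hw : dist (γ • w) w = ℓ)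
    (x z : X) : busemann γ ℓ w x ≤ dist x z + busemann γ ℓ w z := by
  have h : ∀ n : ℕ, busemann γ ℓ w x - dist x z ≤ dist z (γ ^ n • w) - n * ℓ := fun n => by
    have := busemann_le hle hw x n
    have := dist_triangle x z (γ ^ n • w)
    linarith
  have : busemann γ ℓ w x - dist x z ≤ busemann γ ℓ w z := le_ciInf h
  linarith

theorem busemann_pow_smul_le (hle : ∀ u : X, ℓ ≤ dist (γ • u) u) (hw : dist (γ • w) w = ℓ)
    (z : X) (k : ℕ) : busemann γ ℓ w (γ ^ k • z) ≤ busemann γ ℓ w z - k * ℓ := by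
  have h : ∀ n : ℕ, busemann γ ℓ w (γ ^ k • z) + k * ℓ ≤ dist z (γ ^ n • w) - n * ℓ :=
    fun n => by
      have := busemann_le hle hw (γ ^ k • z) (k + n)
      rw [pow_add, mul_smul, dist_smul] at this
      push_cast at this
      linarith
  have : busemann γ ℓ w (γ ^ k • z) + k * ℓ ≤ busemann γ ℓ w z := le_ciInf h
  linarith

theorem busemann_le_busemann_add (hle : ∀ u : X, ℓ ≤ dist (γ • u) u)
    (hw' : dist (γ • w') w' = ℓ) (w x : X) :
    busemann γ ℓ w' x ≤ busemann γ ℓ w x + busemann γ ℓ w' w := by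
  have h : ∀ n : ℕ, busemann γ ℓ w' x - busemann γ ℓ w' w ≤ dist x (γ ^ n • w) - n * ℓ :=
    fun n => by
      have := busemann_le_dist_add hle hw' x (γ ^ n • w)
      have := busemann_pow_smul_le hle hw' w n
      linarith
  have : busemann γ ℓ w' x - busemann γ ℓ w' w ≤ busemann γ ℓ w x := le_ciInf h
  linarith

/-- Two axes of `γ` are parallel: for large `n` the CN inequality on the quadrilateral
`w', γ ^ n • w', γ ^ n • w, w` gives `n ℓ (b_w w' + b_w' w) ≤ dist w w' ^ 2`. -/
theorem busemann_add_busemann_nonpos (hℓ : 0 < ℓ) (hle : ∀ u : X, ℓ ≤ dist (γ • u) u)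
    (hw : dist (γ • w) w = ℓ) (hw' : dist (γ • w') w' = ℓ) :
    busemann γ ℓ w w' + busemann γ ℓ w' w ≤ 0 := by
  set D := dist w w'
  set β := busemann γ ℓ w w'
  set β' := busemann γ ℓ w' w
  have key : ∀ n : ℕ, D ≤ n * ℓ → n * ℓ * (β + β') ≤ D ^ 2 := by
    intro n hn
    have hquad := dist_sq_add_dist_sq_le w' (γ ^ n • w') (γ ^ n • w) w
    have e1 : dist w' (γ ^ n • w') = n * ℓ := by rw [dist_comm, dist_pow_smul_self hle hw']
    have e2 : dist (γ ^ n • w') (γ ^ n • w) = D := by rw [dist_smul, dist_comm]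
    have e3 := dist_pow_smul_self hle hw n
    have e4 : dist (γ ^ n • w') w = dist w (γ ^ n • w') := dist_comm _ _
    rw [e1, e2, e3, e4] at hquad
    have ha := busemann_le hle hw w' n
    have hb := busemann_le hle hw' w n
    have ha0 : -D ≤ β := by simpa only [dist_comm] using neg_dist_le_busemann hle hw w'
    have hb0 : -D ≤ β' := neg_dist_le_busemann hle hw' w
    have ha2 : (n * ℓ + β) ^ 2 ≤ dist w' (γ ^ n • w) ^ 2 :=
      pow_le_pow_left₀ (by linarith) (by linarith) 2
    have hb2 : (n * ℓ + β') ^ 2 ≤ dist w (γ ^ n • w') ^ 2 :=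
      pow_le_pow_left₀ (by linarith) (by linarith) 2
    nlinarith [sq_nonneg β, sq_nonneg β']
  by_contra! hc
  have hD : 0 ≤ D := dist_nonneg
  obtain ⟨n, hn⟩ := exists_nat_gt ((D + D ^ 2 / (β + β')) / ℓ)
  rw [div_lt_iff₀ hℓ] at hn
  have hsq : D ^ 2 / (β + β') < n * ℓ := by
    linarith [div_nonneg (sq_nonneg D) hc.le]
  rw [div_lt_iff₀ hc] at hsq
  linarith [key n (by linarith [div_nonneg (sq_nonneg D) hc.le])]

theorem busemann_eq_busemann_add (hℓ : 0 < ℓ) (hle : ∀ u : X, ℓ ≤ dist (γ • u) u)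
    (hw : dist (γ • w) w = ℓ) (hw' : dist (γ • w') w' = ℓ) (x : X) :
    busemann γ ℓ w' x = busemann γ ℓ w x + busemann γ ℓ w' w := by
  have := busemann_le_busemann_add hle hw w' x
  have := busemann_add_busemann_nonpos hℓ hle hw hw'
  linarith [busemann_le_busemann_add hle hw' w x]

theorem exists_monoidHom_centralizer_apply_self (hℓ : 0 < ℓ)
    (hle : ∀ u : X, ℓ ≤ dist (γ • u) u) (hw : dist (γ • w) w = ℓ) :
    ∃ φ : Subgroup.centralizer ({γ} : Set Γ) →* Multiplicative ℝ,
      φ ⟨γ, Subgroup.mem_centralizer_singleton_iff.mpr rfl⟩ = Multiplicative.ofAdd (-ℓ) := by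
  have hcomm : ∀ g : Subgroup.centralizer ({γ} : Set Γ), Commute (g : Γ) γ := fun g =>
    Subgroup.mem_centralizer_singleton_iff.mp g.2
  have hmin : ∀ g : Subgroup.centralizer ({γ} : Set Γ),
      dist (γ • (g : Γ)⁻¹ • w) ((g : Γ)⁻¹ • w) = ℓ := fun g => by
    rw [← mul_smul, ← ((hcomm g).inv_left).eq, mul_smul, dist_smul, hw]
  have hshift : ∀ (g : Subgroup.centralizer ({γ} : Set Γ)) (x : X),
      busemann γ ℓ w ((g : Γ) • x) = busemann γ ℓ ((g : Γ)⁻¹ • w) x := fun g x => by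
    simpa only [smul_inv_smul] using busemann_smul_smul (hcomm g) ((g : Γ)⁻¹ • w) x
  refine ⟨MonoidHom.mk' (fun g => Multiplicative.ofAdd (busemann γ ℓ w ((g : Γ) • w)))
    fun g h => ?_, ?_⟩
  · rw [← ofAdd_add, Subgroup.coe_mul, mul_smul, hshift,
      busemann_eq_busemann_add hℓ hle hw (hmin g), ← hshift, add_comm]
  · refine congrArg Multiplicative.ofAdd (le_antisymm ?_ ?_)
    · simpa using busemann_le hle hw (γ • w) 1
    · simpa only [dist_comm w, hw] using neg_dist_le_busemann hle hw (γ • w)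

end Busemann

/-- If `γ ∈ Γ` acts on a complete CAT(0) space as a hyperbolic isometry (its translation
length is attained at some `x₀` and is positive), then the image of `γ` in the
abelianization of its centralizer `Z_Γ(γ)` has infinite order. -/
theorem hyperbolic_infiniteOrder_in_abelianized_centralizer {X : Type*} [MetricSpace X]
    [CAT0Space X] {Γ : Type*} [Group Γ] [MulAction Γ X]
    (hiso : ∀ g : Γ, Isometry fun x : X => g • x)
    (γ : Γ) (x₀ : X)
    (hmin : dist (γ • x₀) x₀ = sInf (Set.range fun y : X => dist (γ • y) y))
    (hpos : 0 < dist (γ • x₀) x₀) :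
    ¬ IsOfFinOrder (Abelianization.of
      (⟨γ, by simp [Subgroup.mem_centralizer_iff]⟩ :
        Subgroup.centralizer ({γ} : Set Γ))) := by
  have : IsIsometricSMul Γ X := ⟨hiso⟩
  have hle : ∀ u : X, dist (γ • x₀) x₀ ≤ dist (γ • u) u := fun u => by
    rw [hmin]
    exact csInf_le ⟨0, by rintro _ ⟨y, rfl⟩; exact dist_nonneg⟩ ⟨u, rfl⟩
  obtain ⟨φ, hφ⟩ := exists_monoidHom_centralizer_apply_self hpos hle rfl
  intro hfin
  have := ((Abelianization.lift φ).isOfFinOrder hfin).eq_one'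
  rw [Abelianization.lift_apply_of, hφ] at this
  exact hpos.ne' (neg_eq_zero.mp (ofAdd_eq_one.mp this))
end
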